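/- Let p > q be odd primes. Then Hol(C_p × D_q) contains a regular subgroup isomorphic to the cyclic group C_{2pq}, and Hol(C_q × D_p) contains a regular subgroup isomorphic to C_{2pq}. Here C_p × D_q = Multiplicative (ZMod p) × DihedralGroup q, C_q × D_p = Multiplicative (ZMod q) × DihedralGroup p, and C_{2pq} = Multiplicative (ZMod (2*p*q)); a regular subgroup of Hol(N) is a subgroup of Equiv.Perm N contained in Hol(N) that is transitive on N and has order |N|. -/

import Mathlib

/-- The left regular representation of a group `N` in `Equiv.Perm N`. -/
def leftReg (N : Type*) [Group N] : N →* Equiv.Perm N :=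
  MulAction.toPermHom N N

/-- The holomorph of `N`: the normalizer of the image of the left regular
representation inside `Equiv.Perm N`. -/
def Hol (N : Type*) [Group N] : Subgroup (Equiv.Perm N) :=
  Subgroup.normalizer ((leftReg N).range : Set (Equiv.Perm N))

/-- A subgroup of `Equiv.Perm N` is transitive on `N`. -/
def IsTransitiveSubgroup {N : Type*} [Group N] (M : Subgroup (Equiv.Perm N)) : Prop :=
  ∀ a b : N, ∃ g ∈ M, g a = b

/-- A group `G` embeds transitively in `Hol(N)` if there is an injective
homomorphism `G →* Equiv.Perm N` whose range lies in `Hol(N)` and is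
transitive on `N`. -/
def EmbedsTransitively (G : Type*) [Group G] (N : Type*) [Group N] : Prop :=
  ∃ φ : G →* Equiv.Perm N, Function.Injective φ ∧ φ.range ≤ Hol N ∧
    IsTransitiveSubgroup φ.range

/-!
Let `g` generate `C_m` and let `α` be the automorphism of `D_n` fixing the rotations and sending
`sr i` to `sr (i + 1)`. The permutation `σ = λ(g, sr 0) ∘ (id × α)` of `C_m × D_n` lies in the
holomorph and acts coordinatewise: by translation by `g` on `C_m`, an `m`-cycle, and on `D_n` by
`r i ↦ sr i ↦ r (i + 1)`, a `2n`-cycle. When `m` is coprime to `2n`, the orbit of `1` under `σ`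
therefore has length `2mn = |C_m × D_n|`, and `⟨σ⟩` is a regular cyclic subgroup of the holomorph.
For odd primes `p ≠ q` this applies to `(m, n) = (p, q)` and `(q, p)`.
-/

open Equiv Function MulAction Subgroup

section Holomorph

variable {N : Type*} [Group N]

@[simp]
lemma leftReg_apply (n x : N) : leftReg N n x = n * x := rfl

lemma leftReg_mem_Hol (n : N) : leftReg N n ∈ Hol N :=
  le_normalizer ⟨n, rfl⟩

lemma conj_leftReg (f : N ≃* N) (n : N) :
    (f.toEquiv : Perm N) * leftReg N n * (f.toEquiv : Perm N)⁻¹ = leftReg N (f n) := by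
  ext x
  simp [Perm.mul_apply, Perm.inv_def]

lemma toEquiv_mem_Hol (f : N ≃* N) : (f.toEquiv : Perm N) ∈ Hol N := by
  rw [Hol, mem_normalizer_iff]
  rintro -
  constructor
  · rintro ⟨n, rfl⟩
    exact ⟨f n, (conj_leftReg f n).symm⟩
  · rintro ⟨n, hn⟩
    refine ⟨f.symm n, ?_⟩
    rw [← conj_leftReg f.symm n, hn]
    exact (inv_mul_cancel_left _ _).trans (mul_inv_cancel_right _ _)

lemma isTransitiveSubgroup_iff_isPretransitive (M : Subgroup (Perm N)) :
    IsTransitiveSubgroup M ↔ IsPretransitive M N :=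
  ⟨fun h => ⟨fun a b => let ⟨g, hg, e⟩ := h a b; ⟨⟨g, hg⟩, e⟩⟩,
    fun ⟨h⟩ a b => let ⟨g, e⟩ := h a b; ⟨g, g.2, e⟩⟩

end Holomorph

section FullCycle

variable {X : Type*} [Finite X] {σ : Perm X} {x : X}

lemma orbit_zpowers_eq_univ_of_minimalPeriod_eq_card (h : minimalPeriod σ x = Nat.card X) :
    orbit (zpowers σ) x = Set.univ := by
  rw [Set.eq_univ_iff_ncard, ← Nat.card_coe_set_eq, Nat.card_congr (orbitZPowersEquiv σ x),
    Nat.card_zmod]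
  exact h

lemma orderOf_eq_card_of_minimalPeriod_eq_card (h : minimalPeriod σ x = Nat.card X) :
    orderOf σ = Nat.card X := by
  have hfix : (σ ^ Nat.card X) x = x := by
    rw [← h, ← Perm.iterate_eq_pow]
    exact iterate_minimalPeriod
  have hpow : σ ^ Nat.card X = 1 := by
    ext y
    obtain ⟨⟨g, k, rfl⟩, rfl⟩ : y ∈ orbit (zpowers σ) x := by
      rw [orbit_zpowers_eq_univ_of_minimalPeriod_eq_card h]; trivial
    show (σ ^ Nat.card X * σ ^ k) x = (σ ^ k) x
    rw [← zpow_natCast, ← zpow_add, add_comm, zpow_add, Perm.mul_apply, zpow_natCast, hfix]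
  refine Nat.dvd_antisymm (orderOf_dvd_of_pow_eq_one hpow) ?_
  rw [← h, ← isPeriodicPt_iff_minimalPeriod_dvd, IsPeriodicPt, IsFixedPt, Perm.iterate_eq_pow,
    pow_orderOf_eq_one, Perm.one_apply]

end FullCycle

theorem exists_regular_cyclic_subgroup_of_minimalPeriod_eq_card {N : Type*} [Group N] [Finite N]
    {σ : Perm N} (hσ : σ ∈ Hol N) (x : N) (h : minimalPeriod σ x = Nat.card N) :
    ∃ M : Subgroup (Perm N), M ≤ Hol N ∧ IsTransitiveSubgroup M ∧ Nat.card M = Nat.card N ∧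
      Nonempty (M ≃* Multiplicative (ZMod (Nat.card N))) := by
  have hcard : Nat.card (zpowers σ) = Nat.card N := by
    rw [Nat.card_zpowers, orderOf_eq_card_of_minimalPeriod_eq_card h]
  refine ⟨zpowers σ, (zpowers_le).2 hσ, ?_, hcard, ?_⟩
  · rw [isTransitiveSubgroup_iff_isPretransitive, isPretransitive_iff_orbit_eq_univ x]
    exact orbit_zpowers_eq_univ_of_minimalPeriod_eq_card h
  · exact ⟨(hcard ▸ zmodCyclicMulEquiv (isCyclic_zpowers σ)).symm⟩

namespace DihedralGroup

variable (n : ℕ)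

def shiftReflections : DihedralGroup n ≃* DihedralGroup n where
  toFun
    | r i => r i
    | sr i => sr (i + 1)
  invFun
    | r i => r i
    | sr i => sr (i - 1)
  left_inv := by rintro (i | i) <;> simp
  right_inv := by rintro (i | i) <;> simp
  map_mul' := by
    rintro (i | i) (j | j) <;> simp only [r_mul_r, r_mul_sr, sr_mul_r, sr_mul_sr] <;> ring_nf

def reflectionRotationCycle : Perm (DihedralGroup n) :=
  leftReg _ (sr 0) * (shiftReflections n).toEquiv

variable {n}

@[simp]
lemma reflectionRotationCycle_r (i : ZMod n) : reflectionRotationCycle n (r i) = sr i := by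
  simp [reflectionRotationCycle, shiftReflections, Perm.mul_apply]

@[simp]
lemma reflectionRotationCycle_sr (i : ZMod n) : reflectionRotationCycle n (sr i) = r (i + 1) := by
  simp [reflectionRotationCycle, shiftReflections, Perm.mul_apply]

lemma iterate_reflectionRotationCycle_two_mul_one (t : ℕ) :
    (reflectionRotationCycle n)^[2 * t] 1 = r t := by
  have hsq : (reflectionRotationCycle n)^[2] = (· * r 1) := by
    funext x
    cases x <;> simp
  rw [iterate_mul, hsq, mul_right_iterate]
  exact (one_mul _).trans (r_one_pow t)

lemma minimalPeriod_reflectionRotationCycle_one [NeZero n] :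
    minimalPeriod (reflectionRotationCycle n) 1 = 2 * n := by
  refine eq_of_forall_dvd fun k => ?_
  rw [← isPeriodicPt_iff_minimalPeriod_dvd, IsPeriodicPt, IsFixedPt]
  obtain ⟨t, rfl | rfl⟩ := Nat.even_or_odd' k
  · rw [iterate_reflectionRotationCycle_two_mul_one, one_def, r.injEq,
      ZMod.natCast_eq_zero_iff, Nat.mul_dvd_mul_iff_left two_pos]
  · rw [iterate_succ_apply', iterate_reflectionRotationCycle_two_mul_one,
      reflectionRotationCycle_r, one_def]
    refine iff_of_false nofun fun h => ?_
    have := (dvd_mul_right 2 n).trans h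
    omega

end DihedralGroup

lemma coe_leftReg_prod_mul_prodCongr {A B : Type*} [Group A] [Group B] (a : A) (b : B)
    (β : B ≃* B) :
    ⇑(leftReg (A × B) (a, b) * ((MulEquiv.refl A).prodCongr β).toEquiv) =
      Prod.map (a * ·) ⇑(leftReg B b * β.toEquiv) :=
  rfl

open DihedralGroup in
theorem exists_regular_cyclic_subgroup_Hol_prod_dihedral (m n : ℕ) [NeZero m] [NeZero n]
    (hco : m.Coprime (2 * n)) :
    ∃ M : Subgroup (Perm (Multiplicative (ZMod m) × DihedralGroup n)),
      M ≤ Hol (Multiplicative (ZMod m) × DihedralGroup n) ∧ IsTransitiveSubgroup M ∧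
      Nat.card M = Nat.card (Multiplicative (ZMod m) × DihedralGroup n) ∧
      Nonempty (M ≃* Multiplicative (ZMod (2 * m * n))) := by
  have hcard : Nat.card (Multiplicative (ZMod m) × DihedralGroup n) = 2 * m * n := by
    rw [Nat.card_prod, DihedralGroup.nat_card, Nat.card_eq_fintype_card (α := Multiplicative _),
      Fintype.card_multiplicative, ZMod.card]
    ring
  set σ := leftReg _ (Multiplicative.ofAdd (1 : ZMod m), sr 0) *
    ((MulEquiv.refl _).prodCongr (shiftReflections n)).toEquiv
  have hσ : σ ∈ Hol _ := mul_mem (leftReg_mem_Hol _) (toEquiv_mem_Hol _)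
  have hperiod : minimalPeriod σ 1 = Nat.card (Multiplicative (ZMod m) × DihedralGroup n) := by
    rw [coe_leftReg_prod_mul_prodCongr, minimalPeriod_prodMap]
    change (orderOf (Multiplicative.ofAdd (1 : ZMod m))).lcm
      (minimalPeriod (reflectionRotationCycle n) 1) = _
    rw [orderOf_ofAdd_eq_addOrderOf, ZMod.addOrderOf_one,
      minimalPeriod_reflectionRotationCycle_one, hco.lcm_eq_mul, hcard]
    ring
  rw [← hcard]
  exact exists_regular_cyclic_subgroup_of_minimalPeriod_eq_card hσ 1 hperiod

theorem hol_mixed_types_have_regular_cyclic_subgroup (p q : ℕ)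
    (hp : p.Prime) (hq : q.Prime) (hpodd : Odd p) (hqodd : Odd q) (hlt : q < p) :
    (∃ M : Subgroup (Equiv.Perm (Multiplicative (ZMod p) × DihedralGroup q)),
      M ≤ Hol (Multiplicative (ZMod p) × DihedralGroup q) ∧
      IsTransitiveSubgroup M ∧
      Nat.card M = Nat.card (Multiplicative (ZMod p) × DihedralGroup q) ∧
      Nonempty (M ≃* Multiplicative (ZMod (2 * p * q)))) ∧
    (∃ M : Subgroup (Equiv.Perm (Multiplicative (ZMod q) × DihedralGroup p)),
      M ≤ Hol (Multiplicative (ZMod q) × DihedralGroup p) ∧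
      IsTransitiveSubgroup M ∧
      Nat.card M = Nat.card (Multiplicative (ZMod q) × DihedralGroup p) ∧
      Nonempty (M ≃* Multiplicative (ZMod (2 * p * q)))) := by
  have : NeZero p := ⟨hp.ne_zero⟩
  have : NeZero q := ⟨hq.ne_zero⟩
  have hpq : p.Coprime q := (Nat.coprime_primes hp hq).2 hlt.ne'
  constructor
  · exact exists_regular_cyclic_subgroup_Hol_prod_dihedral p q
      (Nat.Coprime.mul_right (Nat.coprime_two_right.2 hpodd) hpq)
  · rw [mul_right_comm]
    exact exists_regular_cyclic_subgroup_Hol_prod_dihedral q p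
      (Nat.Coprime.mul_right (Nat.coprime_two_right.2 hqodd) hpq.symm)
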